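/- arXiv:1309.1200 — 4 statements merged into one kernel-verified Lean document; each statement's English description precedes it below -/
import Mathlib

section
/- For a point (λ_p, λ_s) with 0 < λ_p < μ_p, the interval of stabilizing values of a, namely (λ_s·μ_p/(f_sd(μ_p-λ_p)), 1 - f_ps(1-f_pd)·λ_p/(f_sd(μ_p-λ_p))), is nonempty if and only if λ_s < f_sd - [(f_sd + f_ps(1-f_pd))/μ_p]·λ_p. -/
/-!
Both endpoints of the interval share the positive denominator `f_sd (μ_p - λ_p)`; clearing it,
the interval is nonempty iff `λ_s μ_p < f_sd (μ_p - λ_p) - f_ps (1 - f_pd) λ_p`, and dividing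
by `μ_p > λ_p > 0` gives the stated bound on `λ_s`.
-/

section

variable {α : Type*} [Field α] [LinearOrder α] [IsStrictOrderedRing α]

theorem div_lt_one_sub_div_iff {a b d : α} (hd : 0 < d) : a / d < 1 - b / d ↔ a < d - b := by
  rw [lt_sub_iff_add_lt, ← add_div, div_lt_one hd, lt_sub_iff_add_lt]

theorem mul_lt_mul_sub_sub_iff {s f c l m : α} (hm : 0 < m) :
    s * m < f * (m - l) - c * l ↔ s < f - (f + c) / m * l := by
  have hrhs : f - (f + c) / m * l = (f * (m - l) - c * l) / m := by
    field_simp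
    ring
  rw [hrhs, lt_div_iff₀ hm]

end

theorem stabilizing_interval_nonempty_iff_general
    (f_pd f_ps f_sd : ℝ)
    (hsd : f_sd ∈ Set.Ioo (0:ℝ) 1)
    (μ_p : ℝ)
    (lam_p lam_s : ℝ) (hlp : 0 < lam_p) (hlpμ : lam_p < μ_p) :
    (Set.Ioo (lam_s * μ_p / (f_sd * (μ_p - lam_p)))
        (1 - f_ps * (1 - f_pd) * lam_p / (f_sd * (μ_p - lam_p)))).Nonempty ↔
      lam_s < f_sd - (f_sd + f_ps * (1 - f_pd)) / μ_p * lam_p := by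
  have hden : 0 < f_sd * (μ_p - lam_p) := mul_pos hsd.1 (sub_pos.mpr hlpμ)
  rw [Set.nonempty_Ioo, div_lt_one_sub_div_iff hden, mul_lt_mul_sub_sub_iff (hlp.trans hlpμ)]

/-- the interval of stabilizing service probabilities is nonempty iff
lam_s < f_sd - [(f_sd + f_ps(1-f_pd))/μ_p]·lam_p. -/
theorem stabilizing_interval_nonempty_iff
    (f_pd f_ps f_sd : ℝ)
    (hpd : f_pd ∈ Set.Ioo (0:ℝ) 1) (hps : f_ps ∈ Set.Ioo (0:ℝ) 1)
    (hsd : f_sd ∈ Set.Ioo (0:ℝ) 1)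
    (μ_p : ℝ) (hμ : μ_p = f_pd + f_ps * (1 - f_pd))
    (lam_p lam_s : ℝ) (hlp : 0 < lam_p) (hlpμ : lam_p < μ_p) (hls : 0 < lam_s) :
    (Set.Ioo (lam_s * μ_p / (f_sd * (μ_p - lam_p)))
        (1 - f_ps * (1 - f_pd) * lam_p / (f_sd * (μ_p - lam_p)))).Nonempty ↔
      lam_s < f_sd - (f_sd + f_ps * (1 - f_pd)) / μ_p * lam_p :=
  stabilizing_interval_nonempty_iff_general f_pd f_ps f_sd hsd μ_p lam_p lam_s hlp hlpμ
end

section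
/- The union over a ∈ (0,1) of the regions R(a) = {(λ_p, λ_s) : λ_p > 0, λ_s > 0, λ_p·f_ps(1-f_pd) < f_sd(1-a)(μ_p-λ_p), λ_s·μ_p < a·f_sd·(μ_p-λ_p)} equals the region {(λ_p,λ_s) : λ_p > 0, λ_s > 0, λ_s < f_sd - [(f_sd+f_ps(1-f_pd))/μ_p]·λ_p}. -/
open Set

/-- Splitting `D` as `a * D + (1 - a) * D`: take `a * D = u + ε` and `(1 - a) * D = v + ε` with
`2 * ε = D - u - v`. -/
theorem exists_mem_Ioo_lt_mul_and_lt_one_sub_mul_iff {u v D : ℝ} (hu : 0 ≤ u) (hv : 0 ≤ v) :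
    (∃ a ∈ Ioo (0 : ℝ) 1, u < a * D ∧ v < (1 - a) * D) ↔ u + v < D := by
  constructor
  · rintro ⟨a, -, hua, hva⟩
    linarith
  · intro huv
    have hD : 0 < D := by linarith
    set ε := (D - u - v) / 2 with hε
    refine ⟨(u + ε) / D, ⟨div_pos (by linarith) hD, (div_lt_one hD).2 (by linarith)⟩, ?_, ?_⟩
    · rw [div_mul_cancel₀ _ hD.ne']
      linarith
    · rw [one_sub_div hD.ne', div_mul_cancel₀ _ hD.ne']
      linarith

theorem lt_sub_div_mul_iff_mul_add_mul_lt {x y f c μ : ℝ} (hμ : 0 < μ) :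
    y < f - (f + c) / μ * x ↔ y * μ + x * c < f * (μ - x) := by
  rw [div_mul_eq_mul_div, lt_sub_comm, div_lt_iff₀ hμ]
  constructor <;> intro h <;> linarith

theorem union_of_stability_regions_general
    (f_pd f_ps f_sd : ℝ)
    (hpd : f_pd ∈ Set.Ioo (0:ℝ) 1) (hps : f_ps ∈ Set.Ioo (0:ℝ) 1)
    (μ_p : ℝ) (hμ : μ_p = f_pd + f_ps * (1 - f_pd)) :
    (⋃ a ∈ Set.Ioo (0:ℝ) 1,
        {p : ℝ × ℝ | 0 < p.1 ∧ 0 < p.2 ∧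
          p.1 * (f_ps * (1 - f_pd)) < f_sd * (1 - a) * (μ_p - p.1) ∧
          p.2 * μ_p < a * f_sd * (μ_p - p.1)}) =
      {p : ℝ × ℝ | 0 < p.1 ∧ 0 < p.2 ∧
        p.2 < f_sd - (f_sd + f_ps * (1 - f_pd)) / μ_p * p.1} := by
  obtain ⟨hpd0, hpd1⟩ := hpd
  obtain ⟨hps0, -⟩ := hps
  have hc : 0 ≤ f_ps * (1 - f_pd) := mul_nonneg hps0.le (by linarith)
  have hμ0 : 0 < μ_p := by rw [hμ]; linarith
  ext ⟨x, y⟩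
  simp only [mem_iUnion, mem_ofPred_eq, exists_prop, lt_sub_div_mul_iff_mul_add_mul_lt hμ0]
  constructor
  · rintro ⟨a, ha, hx, hy, hxa, hya⟩
    refine ⟨hx, hy, ?_⟩
    rw [← exists_mem_Ioo_lt_mul_and_lt_one_sub_mul_iff (by positivity) (by positivity)]
    exact ⟨a, ha, by linarith, by linarith⟩
  · rintro ⟨hx, hy, hxy⟩
    rw [← exists_mem_Ioo_lt_mul_and_lt_one_sub_mul_iff (by positivity) (by positivity)] at hxy
    obtain ⟨a, ha, hya, hxa⟩ := hxy
    exact ⟨a, ha, hx, hy, by linarith, by linarith⟩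

/-- the union over a ∈ (0,1) of the randomized-policy stability regions
equals the work-conserving stability region. -/
theorem union_of_stability_regions
    (f_pd f_ps f_sd : ℝ)
    (hpd : f_pd ∈ Set.Ioo (0:ℝ) 1) (hps : f_ps ∈ Set.Ioo (0:ℝ) 1)
    (hsd : f_sd ∈ Set.Ioo (0:ℝ) 1)
    (μ_p : ℝ) (hμ : μ_p = f_pd + f_ps * (1 - f_pd)) :
    (⋃ a ∈ Set.Ioo (0:ℝ) 1,
        {p : ℝ × ℝ | 0 < p.1 ∧ 0 < p.2 ∧
          p.1 * (f_ps * (1 - f_pd)) < f_sd * (1 - a) * (μ_p - p.1) ∧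
          p.2 * μ_p < a * f_sd * (μ_p - p.1)}) =
      {p : ℝ × ℝ | 0 < p.1 ∧ 0 < p.2 ∧
        p.2 < f_sd - (f_sd + f_ps * (1 - f_pd)) / μ_p * p.1} :=
  union_of_stability_regions_general f_pd f_ps f_sd hpd hps μ_p hμ
end

section
/- The empty-system probability G(0,0) = [a·f_sd·(μ_p - λ_p) - λ_s·μ_p] / (a·f_sd·μ_p) lies strictly in (0,1) whenever 0 < λ_p < μ_p, λ_s > 0, and λ_s·μ_p < a·f_sd·(μ_p - λ_p) with a, f_sd ∈ (0,1). -/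
theorem empty_system_probability_in_unit_interval_general
    (f_sd a : ℝ)
    (hsd : f_sd ∈ Set.Ioo (0:ℝ) 1) (ha : a ∈ Set.Ioo (0:ℝ) 1)
    (μ_p : ℝ)
    (lam_p lam_s : ℝ) (hlp : 0 < lam_p) (hlpμ : lam_p < μ_p) (hls : 0 < lam_s)
    (hstab : lam_s * μ_p < a * f_sd * (μ_p - lam_p)) :
    0 < (a * f_sd * (μ_p - lam_p) - lam_s * μ_p) / (a * f_sd * μ_p) ∧
      (a * f_sd * (μ_p - lam_p) - lam_s * μ_p) / (a * f_sd * μ_p) < 1 := by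
  have hμ_pos : 0 < μ_p := hlp.trans hlpμ
  have hrate_pos : 0 < a * f_sd := mul_pos ha.1 hsd.1
  have hden_pos : 0 < a * f_sd * μ_p := mul_pos hrate_pos hμ_pos
  have hnum_pos : 0 < a * f_sd * (μ_p - lam_p) - lam_s * μ_p := sub_pos.2 hstab
  -- the numerator falls short of the denominator by `a * f_sd * lam_p + lam_s * μ_p`
  have hnum_lt_den : a * f_sd * (μ_p - lam_p) - lam_s * μ_p < a * f_sd * μ_p := by
    linarith [mul_pos hrate_pos hlp, mul_pos hls hμ_pos]
  exact ⟨div_pos hnum_pos hden_pos, (div_lt_one hden_pos).2 hnum_lt_den⟩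

/-- the empty-system probability G(0,0) lies strictly in (0,1). -/
theorem empty_system_probability_in_unit_interval
    (f_pd f_ps f_sd a : ℝ)
    (hpd : f_pd ∈ Set.Ioo (0:ℝ) 1) (hps : f_ps ∈ Set.Ioo (0:ℝ) 1)
    (hsd : f_sd ∈ Set.Ioo (0:ℝ) 1) (ha : a ∈ Set.Ioo (0:ℝ) 1)
    (μ_p : ℝ) (hμ : μ_p = f_pd + f_ps * (1 - f_pd))
    (lam_p lam_s : ℝ) (hlp : 0 < lam_p) (hlpμ : lam_p < μ_p) (hls : 0 < lam_s)
    (hstab : lam_s * μ_p < a * f_sd * (μ_p - lam_p)) :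
    0 < (a * f_sd * (μ_p - lam_p) - lam_s * μ_p) / (a * f_sd * μ_p) ∧
      (a * f_sd * (μ_p - lam_p) - lam_s * μ_p) / (a * f_sd * μ_p) < 1 :=
  empty_system_probability_in_unit_interval_general f_sd a hsd ha μ_p lam_p lam_s hlp hlpμ hls hstab
end

section
/- Define D_s(a) = N_s(a)/λ_s with N_s(a) = [λ_p·λ_s·A(a) + (λ_s²-λ_s)·B·(B+λ_p)]/(B·C(a)), A(a) = a·f_sd(μ_p-1), B = μ_p-λ_p, C(a) = (λ_s - a·f_sd)·μ_p + a·f_sd·λ_p. Then ∂D_s/∂a < 0 for all a in the stability interval, i.e., D_s is strictly decreasing in a; the sign follows because ∂D_s/∂a is a positive multiple of λ_s(λ_p² - λ_p) + (μ_p - λ_p)[λ_s·μ_p - (μ_p - λ_p)], which is negative whenever 0 < λ_p < μ_p < 1, 0 < λ_s < 1, and λ_s·μ_p < a·f_sd·(μ_p-λ_p) with a·f_sd < 1. -/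
/-!
`D_s` is a ratio of two affine functions of `a`, so its derivative is `(p s - q r) / (r a + s)²`.
Up to the positive factor `f_sd μ_p (μ_p - λ_p) / (B C(a))²`, the numerator `p s - q r` is
`λ_s (λ_p² - λ_p) + B (λ_s μ_p - B)`. Both summands are negative: the first because
`0 < λ_p < μ_p < 1`, the second because stability and `a f_sd < 1` give `λ_s μ_p < B`.
-/

theorem hasDerivAt_affine_div_affine {𝕜 : Type*} [NontriviallyNormedField 𝕜]
    (p q r s x : 𝕜) (hx : r * x + s ≠ 0) :
    HasDerivAt (fun y => (p * y + q) / (r * y + s)) ((p * s - q * r) / (r * x + s) ^ 2) x := by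
  have hnum : HasDerivAt (fun y => p * y + q) p x := by
    simpa using ((hasDerivAt_id x).const_mul p).add_const q
  have hden : HasDerivAt (fun y => r * y + s) r x := by
    simpa using ((hasDerivAt_id x).const_mul r).add_const s
  exact (hnum.div hden hx).congr_deriv (by ring)

/-- The paper's `D_s(a) = N_s(a) / λ_s`. -/
noncomputable def secondaryDelay (f_sd μ_p lam_p lam_s a : ℝ) : ℝ :=
  ((lam_p * lam_s * (a * f_sd * (μ_p - 1)) +
      (lam_s ^ 2 - lam_s) * (μ_p - lam_p) * ((μ_p - lam_p) + lam_p)) /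
    ((μ_p - lam_p) * ((lam_s - a * f_sd) * μ_p + a * f_sd * lam_p))) / lam_s

theorem secondaryDelay_eq_affine_div_affine (f_sd μ_p lam_p lam_s : ℝ) :
    secondaryDelay f_sd μ_p lam_p lam_s = fun a =>
      (lam_p * lam_s * f_sd * (μ_p - 1) * a + (lam_s ^ 2 - lam_s) * (μ_p - lam_p) * μ_p) /
        (lam_s * (μ_p - lam_p) * f_sd * (lam_p - μ_p) * a + lam_s * (μ_p - lam_p) * lam_s * μ_p) := by
  funext a
  rw [secondaryDelay, div_div]
  congr 1 <;> ring

theorem hasDerivAt_secondaryDelay {f_sd μ_p lam_p lam_s : ℝ} (a : ℝ)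
    (hls : lam_s ≠ 0) (hB : μ_p - lam_p ≠ 0)
    (hC : (lam_s - a * f_sd) * μ_p + a * f_sd * lam_p ≠ 0) :
    HasDerivAt (secondaryDelay f_sd μ_p lam_p lam_s)
      (f_sd * μ_p * (μ_p - lam_p) /
          ((μ_p - lam_p) * ((lam_s - a * f_sd) * μ_p + a * f_sd * lam_p)) ^ 2 *
        (lam_s * (lam_p ^ 2 - lam_p) + (μ_p - lam_p) * (lam_s * μ_p - (μ_p - lam_p)))) a := by
  rw [secondaryDelay_eq_affine_div_affine]
  have hden : lam_s * (μ_p - lam_p) * f_sd * (lam_p - μ_p) * a + lam_s * (μ_p - lam_p) * lam_s * μ_p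
      = lam_s * ((μ_p - lam_p) * ((lam_s - a * f_sd) * μ_p + a * f_sd * lam_p)) := by ring
  refine (hasDerivAt_affine_div_affine _ _ _ _ a
    (hden ▸ mul_ne_zero hls (mul_ne_zero hB hC))).congr_deriv ?_
  rw [hden]
  field_simp
  ring

theorem secondaryDelay_slope_factor_neg {μ_p lam_p lam_s : ℝ} (hlp : 0 < lam_p) (hlp1 : lam_p < 1)
    (hlpμ : lam_p < μ_p) (hls : 0 < lam_s) (hstab : lam_s * μ_p < μ_p - lam_p) :
    lam_s * (lam_p ^ 2 - lam_p) + (μ_p - lam_p) * (lam_s * μ_p - (μ_p - lam_p)) < 0 := by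
  have hprimary : lam_s * (lam_p ^ 2 - lam_p) < 0 :=
    mul_neg_of_pos_of_neg hls (by nlinarith)
  have hsecondary : (μ_p - lam_p) * (lam_s * μ_p - (μ_p - lam_p)) < 0 :=
    mul_neg_of_pos_of_neg (by linarith) (by linarith)
  linarith

theorem Ds_strictly_decreasing_general
    (f_sd : ℝ)
    (hsd : f_sd ∈ Set.Ioo (0:ℝ) 1)
    (μ_p : ℝ) (hμ1 : μ_p < 1)
    (lam_p lam_s : ℝ) (hlp : 0 < lam_p) (hlpμ : lam_p < μ_p)
    (hls : 0 < lam_s) :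
    ∀ a ∈ Set.Ioo (0:ℝ) 1, lam_s * μ_p < a * f_sd * (μ_p - lam_p) →
      (∃ K : ℝ, 0 < K ∧
        deriv (fun a : ℝ =>
          ((lam_p * lam_s * (a * f_sd * (μ_p - 1)) +
              (lam_s ^ 2 - lam_s) * (μ_p - lam_p) * ((μ_p - lam_p) + lam_p)) /
            ((μ_p - lam_p) * ((lam_s - a * f_sd) * μ_p + a * f_sd * lam_p))) / lam_s) a
          = K * (lam_s * (lam_p ^ 2 - lam_p) +
              (μ_p - lam_p) * (lam_s * μ_p - (μ_p - lam_p)))) ∧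
      lam_s * (lam_p ^ 2 - lam_p) + (μ_p - lam_p) * (lam_s * μ_p - (μ_p - lam_p)) < 0 ∧
      deriv (fun a : ℝ =>
          ((lam_p * lam_s * (a * f_sd * (μ_p - 1)) +
              (lam_s ^ 2 - lam_s) * (μ_p - lam_p) * ((μ_p - lam_p) + lam_p)) /
            ((μ_p - lam_p) * ((lam_s - a * f_sd) * μ_p + a * f_sd * lam_p))) / lam_s) a < 0 := by
  intro a ⟨_, ha1⟩ hstab
  obtain ⟨hsd0, hsd1⟩ := hsd
  have hB : 0 < μ_p - lam_p := by linarith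
  have haf : a * f_sd < 1 := by nlinarith
  have hC : (lam_s - a * f_sd) * μ_p + a * f_sd * lam_p < 0 := by linarith
  have hM := secondaryDelay_slope_factor_neg hlp (hlpμ.trans hμ1) hlpμ hls
    (hstab.trans (by nlinarith))
  have hK : 0 < f_sd * μ_p * (μ_p - lam_p) /
      ((μ_p - lam_p) * ((lam_s - a * f_sd) * μ_p + a * f_sd * lam_p)) ^ 2 :=
    div_pos (mul_pos (mul_pos hsd0 (hlp.trans hlpμ)) hB) (sq_pos_of_neg (mul_neg_of_pos_of_neg hB hC))
  have hderiv := (hasDerivAt_secondaryDelay a hls.ne' hB.ne' hC.ne).deriv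
  exact ⟨⟨_, hK, hderiv⟩, hM, hderiv ▸ mul_neg_of_pos_of_neg hK hM⟩

/-- the secondary delay D_s(a) is strictly decreasing in a on the
stability interval: its derivative is a positive multiple of
lam_s(lam_p²-lam_p) + (μ_p-lam_p)[lam_s μ_p - (μ_p-lam_p)], which is negative. -/
theorem Ds_strictly_decreasing
    (f_pd f_ps f_sd : ℝ)
    (hpd : f_pd ∈ Set.Ioo (0:ℝ) 1) (hps : f_ps ∈ Set.Ioo (0:ℝ) 1)
    (hsd : f_sd ∈ Set.Ioo (0:ℝ) 1)
    (μ_p : ℝ) (hμ : μ_p = f_pd + f_ps * (1 - f_pd)) (hμ1 : μ_p < 1)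
    (lam_p lam_s : ℝ) (hlp : 0 < lam_p) (hlpμ : lam_p < μ_p)
    (hls : 0 < lam_s) (hls1 : lam_s < 1) :
    ∀ a ∈ Set.Ioo (0:ℝ) 1, lam_s * μ_p < a * f_sd * (μ_p - lam_p) →
      (∃ K : ℝ, 0 < K ∧
        deriv (fun a : ℝ =>
          ((lam_p * lam_s * (a * f_sd * (μ_p - 1)) +
              (lam_s ^ 2 - lam_s) * (μ_p - lam_p) * ((μ_p - lam_p) + lam_p)) /
            ((μ_p - lam_p) * ((lam_s - a * f_sd) * μ_p + a * f_sd * lam_p))) / lam_s) a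
          = K * (lam_s * (lam_p ^ 2 - lam_p) +
              (μ_p - lam_p) * (lam_s * μ_p - (μ_p - lam_p)))) ∧
      lam_s * (lam_p ^ 2 - lam_p) + (μ_p - lam_p) * (lam_s * μ_p - (μ_p - lam_p)) < 0 ∧
      deriv (fun a : ℝ =>
          ((lam_p * lam_s * (a * f_sd * (μ_p - 1)) +
              (lam_s ^ 2 - lam_s) * (μ_p - lam_p) * ((μ_p - lam_p) + lam_p)) /
            ((μ_p - lam_p) * ((lam_s - a * f_sd) * μ_p + a * f_sd * lam_p))) / lam_s) a < 0 :=
  Ds_strictly_decreasing_general f_sd hsd μ_p hμ1 lam_p lam_s hlp hlpμ hls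
end
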